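/- arXiv:2003.05391 — 2 statements merged into one kernel-verified Lean document; each statement's English description precedes it below -/
import Mathlib

section
/- Let S be a nearly Gorenstein numerical semigroup with minimal generators n_1 < n_2 < ... < n_ν and let (f_1, ..., f_ν) be an NG-vector for S. Then f_1 = F(S). -/
/-!
If `m` is the multiplicity of `S` (its smallest nonzero element, which is the smallest minimal
generator) and `f ∈ PF(S)` satisfies `m + f - F ∈ S`, then this element of `S` is either `0`,
forcing `F = m + f ∈ S`, or at least `m`, forcing `f ≥ F`; since `f ∉ S`, also `f ≤ F`.
-/

/-- A numerical semigroup: a subset of ℕ containing 0, closed under addition,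
with finite complement. -/
def IsNumSgp (S : Set ℕ) : Prop :=
  0 ∈ S ∧ (∀ a ∈ S, ∀ b ∈ S, a + b ∈ S) ∧ (Sᶜ : Set ℕ).Finite

/-- An integer belongs to (the image in ℤ of) S. -/
def memZ (S : Set ℕ) (z : ℤ) : Prop := ∃ s ∈ S, (s : ℤ) = z

/-- F is the Frobenius number of S: the largest natural number not in S. -/
def IsFrob (S : Set ℕ) (F : ℕ) : Prop := F ∉ S ∧ ∀ n, F < n → n ∈ S

/-- The set of pseudo-Frobenius numbers of S. -/
def PF (S : Set ℕ) : Set ℕ := {f | f ∉ S ∧ ∀ s ∈ S, s ≠ 0 → f + s ∈ S}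

/-- n is a minimal generator of S. -/
def IsMinGen (S : Set ℕ) (n : ℕ) : Prop :=
  n ∈ S ∧ n ≠ 0 ∧ ¬∃ a ∈ S, ∃ b ∈ S, a ≠ 0 ∧ b ≠ 0 ∧ a + b = n

/-- S is almost symmetric (Nari): F - f ∈ PF(S) for every f ∈ PF(S). -/
def AlmostSym (S : Set ℕ) (F : ℕ) : Prop :=
  ∀ f ∈ PF S, ∃ g ∈ PF S, (g : ℤ) = (F : ℤ) - (f : ℤ)

/-- S is symmetric: PF(S) = {F(S)} (vacuously true when S = ℕ). -/
def IsSym (S : Set ℕ) : Prop := ∀ F, IsFrob S F → PF S = {F}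

/-- (f_1,...,f_ν) is an NG-vector for S with minimal generators n_1,...,n_ν. -/
def IsNGVector {ν : ℕ} (S : Set ℕ) (n f : Fin ν → ℕ) : Prop :=
  ∀ i, f i ∈ PF S ∧ ∀ g ∈ PF S, memZ S ((n i : ℤ) + (f i : ℤ) - (g : ℤ))

/-- S is nearly Gorenstein (generator criterion): for each minimal generator m
there is f ∈ PF(S) with m + f - g ∈ S for all g ∈ PF(S). -/
def NearlyGGen (S : Set ℕ) : Prop :=
  ∀ m, IsMinGen S m → ∃ f ∈ PF S, ∀ g ∈ PF S, memZ S ((m : ℤ) + (f : ℤ) - (g : ℤ))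

/-- The canonical ideal K(S) = {z ∈ ℤ : F - z ∉ S}. -/
def Kan (S : Set ℕ) (F : ℕ) : Set ℤ := {z | ¬ memZ S ((F : ℤ) - z)}

/-- The relative ideal (S - K(S)) = {z ∈ ℤ : z + K(S) ⊆ S}. -/
def SmK (S : Set ℕ) (F : ℕ) : Set ℤ := {z | ∀ k ∈ Kan S F, memZ S (z + k)}

/-- S is nearly Gorenstein: M(S) ⊆ K(S) + (S - K(S)). -/
def NearlyG (S : Set ℕ) (F : ℕ) : Prop :=
  ∀ m ∈ S, m ≠ 0 → ∃ k ∈ Kan S F, ∃ x ∈ SmK S F, k + x = (m : ℤ)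

theorem IsFrob.mem_PF {S : Set ℕ} {F : ℕ} (hF : IsFrob S F) : F ∈ PF S :=
  ⟨hF.1, fun _ _ hs0 => hF.2 _ (by omega)⟩

theorem IsFrob.le_of_notMem {S : Set ℕ} {F f : ℕ} (hF : IsFrob S F) (hf : f ∉ S) : f ≤ F := by
  by_contra! h
  exact hf (hF.2 f h)

/-- A smallest nonzero element of `S` below `m` would itself be a minimal generator. -/
theorem le_of_forall_isMinGen_le {S : Set ℕ} {m : ℕ} (hm : ∀ g, IsMinGen S g → m ≤ g) :
    ∀ t ∈ S, t ≠ 0 → m ≤ t := by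
  intro t
  induction t using Nat.strong_induction_on with
  | _ t ih =>
    intro htS ht0
    by_contra! hlt
    refine absurd (hm t ⟨htS, ht0, ?_⟩) (by omega)
    rintro ⟨a, haS, b, hbS, ha0, hb0, rfl⟩
    have := ih a (by omega) haS ha0
    omega

theorem eq_of_memZ_add_sub_frob {S : Set ℕ} {F m f : ℕ} (hF : IsFrob S F)
    (hmS : m ∈ S) (hm0 : m ≠ 0) (hmin : ∀ t ∈ S, t ≠ 0 → m ≤ t)
    (hf : f ∈ PF S) (hmem : memZ S ((m : ℤ) + f - F)) : f = F := by
  obtain ⟨s, hsS, hs⟩ := hmem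
  have hfF : f ≤ F := hF.le_of_notMem hf.1
  rcases eq_or_ne s 0 with rfl | hs0
  · have hF_eq : f + m = F := by omega
    exact absurd (hF_eq ▸ hf.2 m hmS hm0) hF.1
  · have := hmin s hsS hs0
    omega

theorem stmt3_general (ν : ℕ) (hν : 0 < ν) (S : Set ℕ) (F : ℕ) (n f : Fin ν → ℕ)
    (hF : IsFrob S F) (hmono : StrictMono n)
    (hgen : ∀ m, IsMinGen S m ↔ ∃ i, n i = m)
    (hNG : IsNGVector S n f) :
    f ⟨0, hν⟩ = F := by
  have hn₀ : IsMinGen S (n ⟨0, hν⟩) := (hgen _).mpr ⟨_, rfl⟩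
  have hmin : ∀ g, IsMinGen S g → n ⟨0, hν⟩ ≤ g := by
    intro g hg
    obtain ⟨i, rfl⟩ := (hgen g).mp hg
    exact hmono.monotone (Fin.mk_le_mk.mpr (Nat.zero_le i))
  exact eq_of_memZ_add_sub_frob hF hn₀.1 hn₀.2.1 (le_of_forall_isMinGen_le hmin)
    (hNG _).1 ((hNG _).2 F hF.mem_PF)

theorem stmt3 (ν : ℕ) (hν : 0 < ν) (S : Set ℕ) (F : ℕ) (n f : Fin ν → ℕ)
    (hS : IsNumSgp S) (hF : IsFrob S F) (hmono : StrictMono n)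
    (hgen : ∀ m, IsMinGen S m ↔ ∃ i, n i = m)
    (hNG : IsNGVector S n f) :
    f ⟨0, hν⟩ = F :=
  stmt3_general ν hν S F n f hF hmono hgen hNG
end

section
/- Let S_1 and S_2 be numerical semigroups, at least one of which is not symmetric. Then for any coprime x ∈ S_2 not a minimal generator of S_2 and y ∈ S_1 not a minimal generator of S_1, the gluing ⟨xS_1, yS_2⟩ is not nearly Gorenstein. -/
/-!
Pseudo-Frobenius numbers of a gluing `T = x S₁ + y S₂` are exactly the integers `x p + y q + x y`
with `p, q` pseudo-Frobenius numbers of `S₁, S₂`, provided `ℕ` is given the pseudo-Frobenius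
number `-1`; so we work with integer pseudo-Frobenius numbers `PFInt`.

Since `x` is not a minimal generator of `S₂`, some minimal generator `m` of `S₂` lies below `x`,
and `y m` is a minimal generator of `T`. Let `f = x p + y q + x y` be its witness in the nearly
Gorenstein condition. Testing it against `x g + y q + x y` for every `g ∈ PF(S₁)` gives
`y m + x (p - g) ∈ T`, and as `m < x` this forces `p - g ∈ S₁`. Together with `p ∉ S₁` this
makes `S₁` symmetric; by the symmetry of gluing the same applies to `S₂`.
-/

def glue (S1 S2 : Set ℕ) (x y : ℕ) : Set ℕ := {m | ∃ a ∈ S1, ∃ b ∈ S2, x * a + y * b = m}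

def PFInt (S : Set ℕ) : Set ℤ := {z | ¬ memZ S z ∧ ∀ s ∈ S, s ≠ 0 → memZ S (z + s)}

lemma exists_greatest_not {P : ℤ → Prop} (hne : ∃ j, ¬ P j) (hB : ∃ B, ∀ j, B < j → P j) :
    ∃ j, ¬ P j ∧ ∀ k, j < k → P k := by
  obtain ⟨B, hB⟩ := hB
  obtain ⟨j, hj, hmax⟩ := Int.exists_greatest_of_bdd
    ⟨B, fun j hj => not_lt.1 fun hBj => hj (hB j hBj)⟩ hne
  exact ⟨j, hj, fun k hjk => by_contra fun hk => (hmax k hk).not_gt hjk⟩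

lemma exists_eq_sub_mul_of_mul_add_mul_eq {x y a b u v : ℤ} (h : IsCoprime x y)
    (he : x * a + y * b = x * u + y * v) : ∃ t, a = u - y * t ∧ b = v + x * t := by
  obtain ⟨α, β, hαβ⟩ := h
  refine ⟨α * (b - v) + β * (u - a), ?_, ?_⟩
  · linear_combination α * he - (a - u) * hαβ
  · linear_combination β * he - (b - v) * hαβ

section memZ

variable {S : Set ℕ}

lemma memZ_natCast_iff {n : ℕ} : memZ S n ↔ n ∈ S :=
  ⟨fun ⟨_, hs, h⟩ => Int.natCast_inj.1 h ▸ hs, fun h => ⟨n, h, rfl⟩⟩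

lemma memZ.nonneg {z : ℤ} (h : memZ S z) : 0 ≤ z := by
  obtain ⟨s, -, rfl⟩ := h
  exact Int.natCast_nonneg s

lemma natCast_mem_PFInt_iff {n : ℕ} : (n : ℤ) ∈ PFInt S ↔ n ∈ PF S := by
  simp only [PFInt, PF, Set.mem_ofPred_eq, ← Nat.cast_add, memZ_natCast_iff]

lemma isMinGen_one (h : 1 ∈ S) : IsMinGen S 1 :=
  ⟨h, one_ne_zero, fun ⟨a, _, b, _, ha, hb, hab⟩ => by omega⟩

lemma exists_isMinGen_lt {n : ℕ} (hn : n ∈ S) (hn0 : n ≠ 0) (hng : ¬ IsMinGen S n) :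
    ∃ m, IsMinGen S m ∧ m < n := by
  induction n using Nat.strong_induction_on with
  | _ n ih =>
    obtain ⟨a, ha, b, -, ha0, hb0, rfl⟩ := not_not.1 fun h => hng ⟨hn, hn0, h⟩
    by_cases hag : IsMinGen S a
    · exact ⟨a, hag, by omega⟩
    · obtain ⟨m, hm, hma⟩ := ih a (by omega) ha ha0 hag
      exact ⟨m, hm, by omega⟩

lemma frob_mem_PF {F : ℕ} (hF : IsFrob S F) : F ∈ PF S :=
  ⟨hF.1, fun s _ hs0 => hF.2 _ (by omega)⟩

lemma isSym_of_forall_sub_memZ {p : ℤ} (hp : ¬ memZ S p) (h : ∀ g ∈ PF S, memZ S (p - g)) :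
    IsSym S := by
  intro F hF
  have hpF : p = F := by
    obtain ⟨_, -, hs⟩ := h F (frob_mem_PF hF)
    by_contra hne
    exact hp ⟨p.toNat, hF.2 _ (by omega), by omega⟩
  refine Set.eq_singleton_iff_unique_mem.2 ⟨frob_mem_PF hF, fun g hg => ?_⟩
  obtain ⟨s, hs, hsg⟩ := h g hg
  by_contra hne
  have : g + s = F := by omega
  exact hF.1 (this ▸ hg.2 s hs (by omega))

end memZ

namespace IsNumSgp

variable {S : Set ℕ} (hS : IsNumSgp S)
include hS

lemma memZ_add {a b : ℤ} (ha : memZ S a) (hb : memZ S b) : memZ S (a + b) := by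
  obtain ⟨s, hs, rfl⟩ := ha
  obtain ⟨t, ht, rfl⟩ := hb
  exact ⟨s + t, hS.2.1 s hs t ht, by push_cast; rfl⟩

lemma memZ_add_mul {a : ℤ} (ha : memZ S a) {n : ℕ} (hn : n ∈ S) {k : ℤ} (hk : 0 ≤ k) :
    memZ S (a + k * n) := by
  induction k, hk using Int.leInduction with
  | base => simpa using ha
  | succ k _ ih =>
    convert hS.memZ_add ih (memZ_natCast_iff.2 hn) using 1
    ring

lemma exists_forall_lt_memZ : ∃ B : ℤ, ∀ z, B < z → memZ S z := by
  obtain ⟨B, hB⟩ := hS.2.2.bddAbove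
  exact ⟨B, fun z hz => ⟨z.toNat, by_contra fun h => absurd (hB h) (by omega), by omega⟩⟩

lemma exists_not_memZ_add_memZ (v : ℤ) {d : ℤ} (hd : 0 < d) :
    ∃ j : ℤ, ¬ memZ S (v + d * j) ∧ memZ S (v + d * j + d) := by
  obtain ⟨B, hB⟩ := hS.exists_forall_lt_memZ
  obtain ⟨j, hj, hgt⟩ := exists_greatest_not (P := fun j => memZ S (v + d * j))
    ⟨-(|v| + 1), fun h => by nlinarith [h.nonneg, le_abs_self v, abs_nonneg v]⟩
    ⟨|B - v|, fun j hj => hB _ (by nlinarith [le_abs_self (B - v), abs_nonneg (B - v)])⟩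
  refine ⟨j, hj, ?_⟩
  convert hgt (j + 1) (by omega) using 1
  ring

lemma neg_one_le_of_mem_PFInt {z : ℤ} (hz : z ∈ PFInt S) : -1 ≤ z := by
  obtain ⟨F, hF, hgt⟩ := exists_greatest_not (P := memZ S)
    ⟨-1, fun h => by have := h.nonneg; omega⟩ hS.exists_forall_lt_memZ
  have hF1 : -1 ≤ F := not_lt.1 fun h => by have := (hgt (-1) h).nonneg; omega
  by_contra hz1
  -- `F - z` lies above the Frobenius number, but `z + (F - z) = F` does not
  obtain ⟨s, hs, hsF⟩ := hgt (F - z) (by omega)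
  exact hF (by convert hz.2 s hs (by omega) using 1; omega)

end IsNumSgp

section glue

variable {S1 S2 : Set ℕ} {x y : ℕ}

lemma glue_comm : glue S1 S2 x y = glue S2 S1 y x := by
  ext m
  exact ⟨fun ⟨a, ha, b, hb, h⟩ => ⟨b, hb, a, ha, by omega⟩,
    fun ⟨a, ha, b, hb, h⟩ => ⟨b, hb, a, ha, by omega⟩⟩

lemma memZ_glue {u v : ℤ} (hu : memZ S1 u) (hv : memZ S2 v) :
    memZ (glue S1 S2 x y) (x * u + y * v) := by
  obtain ⟨a, ha, rfl⟩ := hu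
  obtain ⟨b, hb, rfl⟩ := hv
  exact ⟨x * a + y * b, ⟨a, ha, b, hb, rfl⟩, by push_cast; rfl⟩

lemma memZ_glue_iff (hcop : Nat.Coprime x y) {u v : ℤ} :
    memZ (glue S1 S2 x y) (x * u + y * v) ↔
      ∃ t, memZ S1 (u - y * t) ∧ memZ S2 (v + x * t) := by
  constructor
  · rintro ⟨_, ⟨a, ha, b, hb, rfl⟩, he⟩
    push_cast at he
    obtain ⟨t, hat, hbt⟩ := exists_eq_sub_mul_of_mul_add_mul_eq hcop.isCoprime he
    exact ⟨t, ⟨a, ha, hat⟩, ⟨b, hb, hbt⟩⟩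
  · rintro ⟨t, h1, h2⟩
    convert memZ_glue h1 h2 using 1
    ring

lemma memZ_or_of_memZ_glue (hS1 : IsNumSgp S1) (hS2 : IsNumSgp S2) (hcop : Nat.Coprime x y)
    (hx : x ∈ S2) (hy : y ∈ S1) {u v : ℤ} (h : memZ (glue S1 S2 x y) (x * u + y * v)) :
    memZ S1 (u - y) ∨ memZ S2 v := by
  obtain ⟨t, h1, h2⟩ := (memZ_glue_iff hcop).1 h
  rcases le_or_gt t 0 with ht | ht
  · right
    convert hS2.memZ_add_mul h2 hx (neg_nonneg.2 ht) using 1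
    ring
  · left
    convert hS1.memZ_add_mul h1 hy (k := t - 1) (by omega) using 1
    ring

lemma memZ_of_memZ_glue_of_lt (hS1 : IsNumSgp S1) (hcop : Nat.Coprime x y) (hy : y ∈ S1)
    {u v : ℤ} (h : memZ (glue S1 S2 x y) (x * u + y * v)) (hvx : v < x) : memZ S1 u := by
  obtain ⟨t, h1, h2⟩ := (memZ_glue_iff hcop).1 h
  have ht : 0 ≤ t := not_lt.1 fun ht => by nlinarith [h2.nonneg]
  convert hS1.memZ_add_mul h1 hy ht using 1
  ring

lemma isMinGen_glue_mul (hS1 : IsNumSgp S1) (hcop : Nat.Coprime x y) (hy0 : y ≠ 0) {m : ℕ}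
    (hm : IsMinGen S2 m) (hmx : m < x) : IsMinGen (glue S1 S2 x y) (y * m) := by
  refine ⟨⟨0, hS1.1, m, hm.1, by ring⟩, mul_ne_zero hy0 hm.2.1, ?_⟩
  rintro ⟨_, ⟨a1, -, b1, hb1, rfl⟩, _, ⟨a2, -, b2, hb2, rfl⟩, hs1, hs2, hsum⟩
  obtain ⟨t, ha, hb⟩ := exists_eq_sub_mul_of_mul_add_mul_eq (a := a1 + a2) (b := b1 + b2)
    (u := 0) (v := m) hcop.isCoprime (by have := congrArg (Nat.cast (R := ℤ)) hsum; push_cast at this; linear_combination this)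
  have hy : (0 : ℤ) < y := by omega
  have ht : t = 0 := by
    rcases lt_trichotomy t 0 with ht | ht | ht
    · nlinarith
    · exact ht
    · nlinarith
  subst ht
  have ha1 : a1 = 0 := by omega
  have ha2 : a2 = 0 := by omega
  subst ha1 ha2
  exact hm.2.2 ⟨b1, hb1, b2, hb2, fun h => hs1 (by simp [h]), fun h => hs2 (by simp [h]), by omega⟩

variable (hS1 : IsNumSgp S1) (hS2 : IsNumSgp S2) (hcop : Nat.Coprime x y)
  (hx : x ∈ S2) (hy : y ∈ S1)
include hS1 hS2 hcop hx hy

lemma add_mem_PFInt_glue (hx0 : x ≠ 0) (hy0 : y ≠ 0) {p q : ℤ} (hp : p ∈ PFInt S1)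
    (hq : q ∈ PFInt S2) : x * p + y * q + x * y ∈ PFInt (glue S1 S2 x y) := by
  refine ⟨fun h => ?_, ?_⟩
  · rcases memZ_or_of_memZ_glue hS1 hS2 hcop hx hy (u := p + y) (v := q)
      (by convert h using 1; ring) with h | h
    · exact hp.1 (by simpa using h)
    · exact hq.1 h
  · rintro _ ⟨a, ha, b, hb, rfl⟩ hs
    rcases Nat.eq_zero_or_pos a with rfl | ha0
    · have hb0 : b ≠ 0 := by rintro rfl; simp at hs
      convert memZ_glue (x := x) (y := y) (hp.2 y hy hy0) (hq.2 b hb hb0) using 1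
      push_cast
      ring
    · convert memZ_glue (x := x) (y := y) (hp.2 a ha ha0.ne')
        (hS2.memZ_add (hq.2 x hx hx0) (memZ_natCast_iff.2 hb)) using 1
      push_cast
      ring

lemma exists_of_mem_PFInt_glue (hx0 : x ≠ 0) (hy0 : y ≠ 0) {z : ℤ} (hz : z ∈ PFInt (glue S1 S2 x y)) :
    ∃ p ∈ PFInt S1, ∃ q ∈ PFInt S2, z = x * p + y * q + x * y := by
  obtain ⟨α, β, hαβ⟩ := hcop.isCoprime
  -- among the Bézout representations of `z`, take one with `q ∉ S₂` but `q + x ∈ S₂`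
  obtain ⟨j, hq, hqx⟩ := hS2.exists_not_memZ_add_memZ (z * β) (d := x) (by omega)
  obtain ⟨p, q, rfl, hq, hqx⟩ : ∃ p q : ℤ, z = x * p + y * q + x * y ∧
      ¬ memZ S2 q ∧ memZ S2 (q + x) :=
    ⟨z * α - y * j - y, z * β + x * j, by linear_combination (-z) * hαβ, hq, hqx⟩
  have hp : ¬ memZ S1 p := fun hp =>
    hz.1 (by convert memZ_glue (x := x) (y := y) hp hqx using 1; ring)
  refine ⟨p, ⟨hp, fun s hs hs0 => ?_⟩, q, ⟨hq, fun s hs hs0 => ?_⟩, rfl⟩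
  · have h := hz.2 (x * s) ⟨s, hs, 0, hS2.1, by ring⟩ (mul_ne_zero hx0 hs0)
    rcases memZ_or_of_memZ_glue hS1 hS2 hcop hx hy (u := p + s + y) (v := q)
      (by convert h using 1; push_cast; ring) with h | h
    · simpa using h
    · exact absurd h hq
  · have h := hz.2 (y * s) ⟨0, hS1.1, s, hs, by ring⟩ (mul_ne_zero hy0 hs0)
    rcases memZ_or_of_memZ_glue hS1 hS2 hcop hx hy (u := p + y) (v := q + s)
      (by convert h using 1; push_cast; ring) with h | h
    · exact absurd (by simpa using h) hp
    · exact h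

lemma isSym_of_nearlyGGen_glue (hx0 : x ≠ 0) (hy0 : y ≠ 0) (hxg : ¬ IsMinGen S2 x)
    (hNG : NearlyGGen (glue S1 S2 x y)) : IsSym S1 := by
  obtain ⟨m, hm, hmx⟩ := exists_isMinGen_lt hx hx0 hxg
  obtain ⟨f, hf, hfg⟩ := hNG (y * m) (isMinGen_glue_mul hS1 hcop hy0 hm hmx)
  obtain ⟨p, hp, q, hq, hfpq⟩ :=
    exists_of_mem_PFInt_glue hS1 hS2 hcop hx hy hx0 hy0 (natCast_mem_PFInt_iff.2 hf)
  refine isSym_of_forall_sub_memZ hp.1 fun g hg => ?_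
  have hq1 := hS2.neg_one_le_of_mem_PFInt hq
  obtain ⟨G, hG⟩ := Int.eq_ofNat_of_zero_le (a := x * g + y * q + x * y) (by nlinarith)
  have hGPF : G ∈ PF (glue S1 S2 x y) := natCast_mem_PFInt_iff.1 <|
    hG ▸ add_mem_PFInt_glue hS1 hS2 hcop hx hy hx0 hy0 (natCast_mem_PFInt_iff.2 hg) hq
  refine memZ_of_memZ_glue_of_lt (S2 := S2) hS1 hcop hy (v := m) ?_ (by exact_mod_cast hmx)
  convert hfg G hGPF using 1
  push_cast
  rw [hfpq, ← hG]
  ring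

end glue

theorem stmt12 (S1 S2 : Set ℕ) (hS1 : IsNumSgp S1) (hS2 : IsNumSgp S2)
    (hns : ¬ IsSym S1 ∨ ¬ IsSym S2)
    (x y : ℕ) (hx : x ∈ S2) (hxg : ¬ IsMinGen S2 x)
    (hy : y ∈ S1) (hyg : ¬ IsMinGen S1 y)
    (hcop : Nat.Coprime x y) :
    ¬ NearlyGGen {m : ℕ | ∃ a ∈ S1, ∃ b ∈ S2, x * a + y * b = m} := by
  have hx1 : x ≠ 1 := by rintro rfl; exact hxg (isMinGen_one hx)
  have hy1 : y ≠ 1 := by rintro rfl; exact hyg (isMinGen_one hy)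
  have hx0 : x ≠ 0 := by rintro rfl; exact hy1 (Nat.coprime_zero_left y |>.1 hcop)
  have hy0 : y ≠ 0 := by rintro rfl; exact hx1 (Nat.coprime_zero_right x |>.1 hcop)
  change ¬ NearlyGGen (glue S1 S2 x y)
  intro hNG
  rcases hns with hns | hns
  · exact hns (isSym_of_nearlyGGen_glue hS1 hS2 hcop hx hy hx0 hy0 hxg hNG)
  · rw [glue_comm] at hNG
    exact hns (isSym_of_nearlyGGen_glue hS2 hS1 hcop.symm hy hx hy0 hx0 hyg hNG)
end
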